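/- Let A₁, A₂ ⊆ H × H be monotone operators with resolvents J₁ = J_{A₁}, J₂ = J_{A₂}, K₁ = J_{A₁/λ₂}, K₂ = J_{A₂/λ₁}. Then the following are equivalent: E ≠ ∅; F ≠ ∅; S ≠ ∅; Fix J_A ≠ ∅. -/
import Mathlib


open scoped RealInnerProductSpace

lemma res_unique' {H : Type*} [NormedAddCommGroup H] [InnerProductSpace ℝ H]
    (μ : ℝ) (hμ : 0 < μ) (A : Set (H × H))
    (hA : ∀ x u y v : H, (x, u) ∈ A → (y, v) ∈ A → 0 ≤ ⟪x - y, u - v⟫)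
    {z x x' : H} (hx : (x, μ • (z - x)) ∈ A) (hx' : (x', μ • (z - x')) ∈ A) :
    x = x' := by
  have h0 := hA x _ x' _ hx hx'
  rw [show μ • (z - x) - μ • (z - x') = μ • (x' - x) from by module] at h0
  rw [real_inner_smul_right] at h0
  rw [show x' - x = -(x - x') from by abel, inner_neg_right,
    real_inner_self_eq_norm_sq] at h0
  have hs : ‖x - x'‖ ^ 2 ≤ 0 := by nlinarith
  have : ‖x - x'‖ = 0 := by nlinarith [sq_nonneg ‖x - x'‖, norm_nonneg (x - x')]
  exact sub_eq_zero.mp (norm_eq_zero.mp this)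

/-- `E ≠ ∅ ↔ F ≠ ∅ ↔ S ≠ ∅ ↔ Fix J_A ≠ ∅`. -/
theorem nonemptiness_equivalences
    {H : Type*} [NormedAddCommGroup H] [InnerProductSpace ℝ H]
    (l₁ l₂ : ℝ) (hl₁ : 0 < l₁) (hl₂ : 0 < l₂) (hl : l₁ + l₂ = 1)
    (A₁ A₂ : Set (H × H))
    (hA₁ : ∀ x u y v : H, (x, u) ∈ A₁ → (y, v) ∈ A₁ → 0 ≤ ⟪x - y, u - v⟫)
    (hA₂ : ∀ x u y v : H, (x, u) ∈ A₂ → (y, v) ∈ A₂ → 0 ≤ ⟪x - y, u - v⟫)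
    (J₁ J₂ K₁ K₂ : H → H)
    (hJ₁ : ∀ z : H, (J₁ z, z - J₁ z) ∈ A₁)
    (hJ₂ : ∀ z : H, (J₂ z, z - J₂ z) ∈ A₂)
    (hK₁ : ∀ z : H, (K₁ z, l₂ • (z - K₁ z)) ∈ A₁)
    (hK₂ : ∀ z : H, (K₂ z, l₁ • (z - K₂ z)) ∈ A₂) :
    List.TFAE
      [({x : H | K₁ (K₂ x) = x}).Nonempty,
       ({y : H | K₂ (K₁ y) = y}).Nonempty,
       ({p : H × H | (p.1, l₂ • (p.2 - p.1)) ∈ A₁ ∧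
          (p.2, l₁ • (p.1 - p.2)) ∈ A₂}).Nonempty,
       ({z : H | z = l₁ • J₁ z + l₂ • J₂ z}).Nonempty] := by
  have hJ₁' : ∀ z : H, (J₁ z, (1:ℝ) • (z - J₁ z)) ∈ A₁ := by
    intro z; rw [one_smul]; exact hJ₁ z
  have hJ₂' : ∀ z : H, (J₂ z, (1:ℝ) • (z - J₂ z)) ∈ A₂ := by
    intro z; rw [one_smul]; exact hJ₂ z
  tfae_have 3 → 1
  | ⟨⟨x, y⟩, h₁, h₂⟩ => by
    refine ⟨x, ?_⟩
    have hy : K₂ x = y := res_unique' l₁ hl₁ A₂ hA₂ (hK₂ x) h₂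
    have hx : K₁ y = x := res_unique' l₂ hl₂ A₁ hA₁ (hK₁ y) h₁
    show K₁ (K₂ x) = x
    rw [hy, hx]
  tfae_have 1 → 3
  | ⟨x, hx⟩ => by
    refine ⟨(x, K₂ x), ?_, hK₂ x⟩
    have : K₁ (K₂ x) = x := hx
    simpa [this] using hK₁ (K₂ x)
  tfae_have 3 → 2
  | ⟨⟨x, y⟩, h₁, h₂⟩ => by
    refine ⟨y, ?_⟩
    have hy : K₂ x = y := res_unique' l₁ hl₁ A₂ hA₂ (hK₂ x) h₂
    have hx : K₁ y = x := res_unique' l₂ hl₂ A₁ hA₁ (hK₁ y) h₁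
    show K₂ (K₁ y) = y
    rw [hx, hy]
  tfae_have 2 → 3
  | ⟨y, hy⟩ => by
    refine ⟨(K₁ y, y), hK₁ y, ?_⟩
    have : K₂ (K₁ y) = y := hy
    simpa [this] using hK₂ (K₁ y)
  tfae_have 3 → 4
  | ⟨⟨x, y⟩, h₁, h₂⟩ => by
    refine ⟨l₁ • x + l₂ • y, ?_⟩
    have hl1 : l₁ = 1 - l₂ := by linarith
    have e1 : (1:ℝ) • (l₁ • x + l₂ • y - x) = l₂ • (y - x) := by
      rw [hl1]; module
    have e2 : (1:ℝ) • (l₁ • x + l₂ • y - y) = l₁ • (x - y) := by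
      rw [hl1]; module
    have hx : J₁ (l₁ • x + l₂ • y) = x :=
      res_unique' 1 one_pos A₁ hA₁ (hJ₁' _) (by rw [e1]; exact h₁)
    have hy : J₂ (l₁ • x + l₂ • y) = y :=
      res_unique' 1 one_pos A₂ hA₂ (hJ₂' _) (by rw [e2]; exact h₂)
    show l₁ • x + l₂ • y = l₁ • J₁ (l₁ • x + l₂ • y) + l₂ • J₂ (l₁ • x + l₂ • y)
    rw [hx, hy]
  tfae_have 4 → 3
  | ⟨z, hz⟩ => by
    have hz' : z = l₁ • J₁ z + l₂ • J₂ z := hz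
    have hl1 : l₁ = 1 - l₂ := by linarith
    have hl2 : l₂ = 1 - l₁ := by linarith
    have h1 := hJ₁ z
    have h2 := hJ₂ z
    set a := J₁ z with ha
    set b := J₂ z with hb
    refine ⟨(a, b), ?_, ?_⟩
    · have e1 : z - a = l₂ • (b - a) := by rw [hz', hl1]; module
      rwa [e1] at h1
    · have e2 : z - b = l₁ • (a - b) := by rw [hz', hl2]; module
      rwa [e2] at h2
  tfae_finish
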